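/- arXiv:2209.08651 — 8 statements merged into one kernel-verified Lean document; each statement's English description precedes it below -/
import Mathlib

section
/- If 2 ≤ q ≤ 3 then for all real t ≥ -1, (1+t)^q ≤ 1 + q·t + (1/2)·q·(q-1)·t² + (max(t,0))^q. -/
/-!
Both sides agree at `t = 0`, so it suffices to compare derivatives. For `t ≥ 0` the
derivative inequality is `q` times the case `r = q - 1` of `(1 + s) ^ r ≤ 1 + r s + s ^ r`
(`1 ≤ r ≤ 2`), whose own derivative inequality is the subadditivity of `s ↦ s ^ (r - 1)`.
For `-1 ≤ t ≤ 0` the derivative inequality is Bernoulli's inequality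
`1 + (q - 1) t ≤ (1 + t) ^ (q - 1)`.
-/

open Set

theorem sub_le_sub_of_hasDerivAt_le {f g f' g' : ℝ → ℝ} {a b : ℝ} (hab : a ≤ b)
    (hf : ∀ x ∈ Icc a b, HasDerivAt f (f' x) x) (hg : ∀ x ∈ Icc a b, HasDerivAt g (g' x) x)
    (hle : ∀ x ∈ Ioo a b, f' x ≤ g' x) : f b - f a ≤ g b - g a := by
  have hmono : MonotoneOn (fun x => g x - f x) (Icc a b) := by
    refine monotoneOn_of_hasDerivWithinAt_nonneg (convex_Icc a b)
      (fun x hx => ((hg x hx).sub (hf x hx)).continuousAt.continuousWithinAt)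
      (fun x hx => ((hg x (interior_subset hx)).sub (hf x (interior_subset hx))).hasDerivWithinAt)
      ?_
    rw [interior_Icc]
    exact fun x hx => sub_nonneg.2 (hle x hx)
  have := hmono (left_mem_Icc.2 hab) (right_mem_Icc.2 hab) hab
  linarith

theorem hasDerivAt_one_add_rpow {p : ℝ} (hp : 1 ≤ p) (x : ℝ) :
    HasDerivAt (fun x => (1 + x) ^ p) (p * (1 + x) ^ (p - 1)) x := by
  simpa using ((hasDerivAt_id x).const_add 1).rpow_const (Or.inr hp)

theorem hasDerivAt_taylor_two (q x : ℝ) :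
    HasDerivAt (fun x => 1 + q * x + 1 / 2 * q * (q - 1) * x ^ 2) (q + q * (q - 1) * x) x := by
  refine ((((hasDerivAt_id' x).const_mul q).const_add 1).fun_add
    ((hasDerivAt_pow 2 x).const_mul (1 / 2 * q * (q - 1)))).congr_deriv ?_
  push_cast
  ring

theorem one_add_rpow_le_one_add_mul_add_rpow {r s : ℝ} (hr1 : 1 ≤ r) (hr2 : r ≤ 2)
    (hs : 0 ≤ s) : (1 + s) ^ r ≤ 1 + r * s + s ^ r := by
  have hG : ∀ x, HasDerivAt (fun x => 1 + r * x + x ^ r) (r + r * x ^ (r - 1)) x := fun x =>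
    ((((hasDerivAt_id' x).const_mul r).const_add 1).fun_add
      (Real.hasDerivAt_rpow_const (Or.inr hr1))).congr_deriv (by rw [mul_one])
  have key := sub_le_sub_of_hasDerivAt_le hs (fun x _ => hasDerivAt_one_add_rpow hr1 x)
    (fun x _ => hG x) fun x hx => by
      have := Real.rpow_add_le_add_rpow zero_le_one hx.1.le (by linarith : 0 ≤ r - 1)
        (by linarith)
      rw [Real.one_rpow] at this
      linarith [mul_le_mul_of_nonneg_left this (by linarith : 0 ≤ r)]
  simp only [add_zero, mul_zero, Real.one_rpow, Real.zero_rpow (by linarith : r ≠ 0)] at key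
  linarith

theorem one_add_rpow_le_taylor_add_rpow {q t : ℝ} (hq2 : 2 ≤ q) (hq3 : q ≤ 3) (ht : 0 ≤ t) :
    (1 + t) ^ q ≤ 1 + q * t + 1 / 2 * q * (q - 1) * t ^ 2 + t ^ q := by
  have hG : ∀ x, HasDerivAt (fun x => 1 + q * x + 1 / 2 * q * (q - 1) * x ^ 2 + x ^ q)
      (q + q * (q - 1) * x + q * x ^ (q - 1)) x := fun x =>
    (hasDerivAt_taylor_two q x).fun_add (Real.hasDerivAt_rpow_const (Or.inr (by linarith)))
  have key := sub_le_sub_of_hasDerivAt_le ht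
    (fun x _ => hasDerivAt_one_add_rpow (by linarith : 1 ≤ q) x) (fun x _ => hG x) fun x hx => by
      have := one_add_rpow_le_one_add_mul_add_rpow (by linarith : 1 ≤ q - 1) (by linarith)
        hx.1.le
      linarith [mul_le_mul_of_nonneg_left this (by linarith : 0 ≤ q)]
  simp only [add_zero, mul_zero, Real.one_rpow, Real.zero_rpow (by linarith : q ≠ 0)] at key
  linarith

theorem one_add_rpow_le_taylor_of_nonpos {q t : ℝ} (hq : 2 ≤ q) (ht : -1 ≤ t)
    (ht0 : t ≤ 0) :
    (1 + t) ^ q ≤ 1 + q * t + 1 / 2 * q * (q - 1) * t ^ 2 := by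
  have key := sub_le_sub_of_hasDerivAt_le ht0 (fun x _ => hasDerivAt_taylor_two q x)
    (fun x _ => hasDerivAt_one_add_rpow (by linarith : 1 ≤ q) x) fun x hx => by
      have := one_add_mul_self_le_rpow_one_add (by linarith [hx.1] : -1 ≤ x)
        (by linarith : 1 ≤ q - 1)
      linarith [mul_le_mul_of_nonneg_left this (by linarith : 0 ≤ q)]
  simp only [add_zero, mul_zero, Real.one_rpow] at key
  linarith

theorem rpow_le_taylor_q_two_three (q t : ℝ) (hq2 : 2 ≤ q) (hq3 : q ≤ 3)
    (ht : -1 ≤ t) :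
    (1 + t) ^ q ≤ 1 + q * t + (1 / 2) * q * (q - 1) * t ^ 2 + (max t 0) ^ q := by
  rcases le_or_gt t 0 with h | h
  · rw [max_eq_right h, Real.zero_rpow (by linarith : q ≠ 0), add_zero]
    exact one_add_rpow_le_taylor_of_nonpos hq2 ht h
  · rw [max_eq_left h.le]
    exact one_add_rpow_le_taylor_add_rpow hq2 hq3 h.le
end

section
/- If 3 ≤ q ≤ 4 then for all real t ≥ -1, (1+t)^q ≤ 1 + q·t + (1/2)·q·(q-1)·t² + (1/6)·q·(q-1)·(q-2)·t³ + |t|^q. -/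
/-!
Let `R p n x` be `(1 + x) ^ p` minus its binomial Taylor polynomial of degree `n`. Its derivative
is `p * R (p - 1) (n - 1) x`, while `|x| ^ p` has derivative `p * sign x * |x| ^ (p - 1)`. Hence if
`|R (p - 1) (n - 1)| ≤ |x| ^ (p - 1)`, both functions `|x| ^ p ∓ R p n x` decrease on `[-1, 0]`
and increase on `[0, ∞)`, and they vanish at `0`. By induction on `n`, `|R p n x| ≤ |x| ^ p` for
`p ∈ [n, n + 1]`, starting from the Hölder continuity `|a ^ p - b ^ p| ≤ |a - b| ^ p` of `x ^ p`
for `p ∈ [0, 1]`. The theorem is the upper half of the case `n = 3`.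
-/

open Set Finset Polynomial

section Field

variable {K : Type*} [Field K] [CharZero K]

theorem Ring.choose_eq_descPochhammer_eval_div (p : K) (k : ℕ) :
    Ring.choose p k = (descPochhammer K k).eval p / k.factorial := by
  rw [Ring.choose_eq_smul, ← aeval_eq_smeval, aeval_def, eval₂_eq_eval_map, descPochhammer_map,
    smul_eq_mul, div_eq_inv_mul]

theorem Ring.succ_mul_choose_succ (p : K) (k : ℕ) :
    (k + 1) * Ring.choose p (k + 1) = p * Ring.choose (p - 1) k := by
  rw [choose_eq_descPochhammer_eval_div, choose_eq_descPochhammer_eval_div,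
    descPochhammer_succ_left]
  simp only [eval_mul, eval_X, eval_comp, eval_sub, eval_one, Nat.factorial_succ, Nat.cast_mul,
    Nat.cast_add, Nat.cast_one]
  field_simp

end Field

theorem abs_rpow_sub_rpow_le {a b p : ℝ} (ha : 0 ≤ a) (hb : 0 ≤ b) (hp₀ : 0 ≤ p) (hp₁ : p ≤ 1) :
    |a ^ p - b ^ p| ≤ |a - b| ^ p := by
  wlog hba : b ≤ a generalizing a b
  · rw [abs_sub_comm, abs_sub_comm a]
    exact this hb ha (by linarith)
  have hmono : b ^ p ≤ a ^ p := Real.rpow_le_rpow hb hba hp₀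
  have hsub : a ^ p ≤ (a - b) ^ p + b ^ p := by
    simpa using Real.rpow_add_le_add_rpow (sub_nonneg.2 hba) hb hp₀ hp₁
  rw [abs_of_nonneg (sub_nonneg.2 hmono), abs_of_nonneg (sub_nonneg.2 hba)]
  linarith

theorem isMinOn_Ici_of_hasDerivAt_sign {f f' : ℝ → ℝ} {a c : ℝ} (hac : a ≤ c)
    (hf : ContinuousOn f (Ici a)) (hf' : ∀ x ∈ Ioi a, x ≠ c → HasDerivAt f (f' x) x)
    (hleft : ∀ x ∈ Ioo a c, f' x ≤ 0) (hright : ∀ x ∈ Ioi c, 0 ≤ f' x) :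
    IsMinOn f (Ici a) c := by
  refine isMinOn_iff.2 fun x (hx : a ≤ x) => ?_
  rcases le_total x c with hxc | hcx
  · have hanti : AntitoneOn f (Icc a c) := by
      refine antitoneOn_of_hasDerivWithinAt_nonpos (f' := f') (convex_Icc a c)
        (hf.mono Icc_subset_Ici_self) ?_ ?_ <;> rw [interior_Icc]
      · exact fun y hy => (hf' y hy.1 hy.2.ne).hasDerivWithinAt
      · exact hleft
    exact hanti ⟨hx, hxc⟩ ⟨hac, le_rfl⟩ hxc
  · have hmono : MonotoneOn f (Ici c) := by
      refine monotoneOn_of_hasDerivWithinAt_nonneg (f' := f') (convex_Ici c)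
        (hf.mono (Ici_subset_Ici.2 hac)) ?_ ?_ <;> rw [interior_Ici]
      · exact fun y (hy : c < y) => (hf' y (hac.trans_lt hy) hy.ne').hasDerivWithinAt
      · exact hright
    exact hmono self_mem_Ici hcx hcx

noncomputable def binomialRemainder (p : ℝ) (n : ℕ) (x : ℝ) : ℝ :=
  (1 + x) ^ p - ∑ k ∈ range (n + 1), Ring.choose p k * x ^ k

theorem binomialRemainder_apply_zero (p : ℝ) (n : ℕ) : binomialRemainder p n 0 = 0 := by
  simp [binomialRemainder, sum_range_succ']

theorem continuous_binomialRemainder {p : ℝ} (hp : 0 ≤ p) (n : ℕ) :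
    Continuous (binomialRemainder p n) := by
  unfold binomialRemainder
  have := Real.continuous_rpow_const hp
  fun_prop

theorem hasDerivAt_binomialRemainder (p : ℝ) (n : ℕ) {x : ℝ} (hx : -1 < x) :
    HasDerivAt (binomialRemainder p (n + 1)) (p * binomialRemainder (p - 1) n x) x := by
  have hpow : HasDerivAt (fun y => (1 + y) ^ p) (1 * p * (1 + x) ^ (p - 1)) x :=
    ((hasDerivAt_id x).const_add 1).rpow_const (Or.inl (ne_of_gt (by simp; linarith)))
  have hsum : HasDerivAt (fun y => ∑ k ∈ range (n + 2), Ring.choose p k * y ^ k)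
      (∑ k ∈ range (n + 2), Ring.choose p k * (k * x ^ (k - 1))) x :=
    HasDerivAt.fun_sum fun k _ => (hasDerivAt_pow k x).const_mul _
  refine (hpow.sub hsum).congr_deriv ?_
  rw [sum_range_succ', binomialRemainder, mul_sub, mul_sum]
  simp only [Nat.cast_add, Nat.cast_one, Nat.add_sub_cancel, CharP.cast_eq_zero, zero_mul,
    mul_zero, add_zero]
  congr 1
  · ring
  · refine sum_congr rfl fun k _ => ?_
    linear_combination x ^ k * Ring.succ_mul_choose_succ p k

theorem abs_binomialRemainder_succ_le {p : ℝ} {n : ℕ} (hp : 0 < p)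
    (ih : ∀ y, -1 ≤ y → |binomialRemainder (p - 1) n y| ≤ |y| ^ (p - 1)) {x : ℝ} (hx : -1 ≤ x) :
    |binomialRemainder p (n + 1) x| ≤ |x| ^ p := by
  suffices key : ∀ s : ℝ, |s| = 1 → s * binomialRemainder p (n + 1) x ≤ |x| ^ p by
    have := key (-1) (by norm_num)
    have := key 1 (by norm_num)
    rw [abs_le]
    constructor <;> linarith
  intro s hs
  have hR (y : ℝ) (hy : -1 ≤ y) : |s * binomialRemainder (p - 1) n y| ≤ |y| ^ (p - 1) := by
    rw [abs_mul, hs, one_mul]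
    exact ih y hy
  have hmin : IsMinOn (fun y => |y| ^ p - s * binomialRemainder p (n + 1) y) (Ici (-1)) 0 := by
    refine isMinOn_Ici_of_hasDerivAt_sign (by norm_num)
      (f' := fun y => p * (SignType.sign y * |y| ^ (p - 1) - s * binomialRemainder (p - 1) n y))
      ?_ ?_ ?_ ?_
    · exact ((continuous_abs.rpow_const fun _ => Or.inr hp.le).sub
        (continuous_const.mul (continuous_binomialRemainder hp.le _))).continuousOn
    · intro y hy hy₀
      refine (((hasDerivAt_abs hy₀).rpow_const (p := p) (Or.inl (abs_ne_zero.2 hy₀))).sub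
        ((hasDerivAt_binomialRemainder p n hy).const_mul s)).congr_deriv ?_
      ring
    · intro y hy
      have := abs_le.1 (hR y hy.1.le)
      simp only [sign_neg hy.2, SignType.coe_neg_one]
      exact mul_nonpos_of_nonneg_of_nonpos hp.le (by linarith)
    · intro y (hy : 0 < y)
      have := abs_le.1 (hR y (by linarith))
      simp only [sign_pos hy, SignType.coe_one]
      exact mul_nonneg hp.le (by linarith)
  simpa [binomialRemainder_apply_zero, Real.zero_rpow hp.ne'] using hmin (mem_Ici.2 hx)

theorem abs_binomialRemainder_le :
    ∀ (n : ℕ) {p x : ℝ}, n ≤ p → p ≤ n + 1 → -1 ≤ x → |binomialRemainder p n x| ≤ |x| ^ p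
  | 0, p, x, hn, hp, hx => by
    simpa [binomialRemainder] using
      abs_rpow_sub_rpow_le (by linarith : 0 ≤ 1 + x) zero_le_one (by simpa using hn)
        (by simpa using hp)
  | n + 1, p, x, hn, hp, hx => by
    push_cast at hn hp
    refine abs_binomialRemainder_succ_le (by linarith [n.cast_nonneg (α := ℝ)])
      (fun y hy => abs_binomialRemainder_le n ?_ ?_ hy) hx <;> linarith

theorem rpow_le_taylor_q_three_four (q t : ℝ) (hq3 : 3 ≤ q) (hq4 : q ≤ 4)
    (ht : -1 ≤ t) :
    (1 + t) ^ q ≤ 1 + q * t + (1 / 2) * q * (q - 1) * t ^ 2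
      + (1 / 6) * q * (q - 1) * (q - 2) * t ^ 3 + |t| ^ q := by
  have h := (abs_le.1 (abs_binomialRemainder_le 3 (p := q) (by norm_num; linarith)
    (by norm_num; linarith) ht)).2
  simp only [binomialRemainder, sum_range_succ, Ring.choose_eq_descPochhammer_eval_div,
    descPochhammer_succ_eval] at h
  norm_num [Nat.factorial] at h
  linarith
end

section
/- For all real q ≥ 2 and all real v with v ≥ M̄ ≥ √e, one has q·v^(q-1) - 2·v ≤ ((1 + 2·ln M̄)/M̄)·(q-2)·v^q. -/
open Real Set

/-- Writing `v = v ^ (q - 1) * v ^ (2 - q)`, this is `exp (-t) ≥ 1 - t` for `t = (q - 2) log v`. -/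
theorem mul_rpow_sub_one_sub_two_mul_le {q v : ℝ} (hv : 0 < v) :
    q * v ^ (q - 1) - 2 * v ≤ (1 + 2 * log v) * (q - 2) * v ^ (q - 1) := by
  have hsplit : v = v ^ (2 - q) * v ^ (q - 1) := by
    rw [← rpow_add hv]
    norm_num
  have hexp : 1 - (q - 2) * log v ≤ v ^ (2 - q) := by
    rw [rpow_def_of_pos hv]
    linarith [add_one_le_exp (log v * (2 - q))]
  calc q * v ^ (q - 1) - 2 * v = (q - 2 * v ^ (2 - q)) * v ^ (q - 1) := by
        rw [sub_mul, mul_assoc, ← hsplit]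
    _ ≤ (1 + 2 * log v) * (q - 2) * v ^ (q - 1) := by
        gcongr
        linarith

/-- By `log v = log M + log (v / M) ≤ log M + v / M - 1`, this reduces to
`(v - M) * (2 * log M - 1) ≥ 0`, and `log M ≥ 1 / 2` on `[√e, ∞)`. -/
theorem one_add_two_mul_log_div_antitoneOn :
    AntitoneOn (fun x : ℝ ↦ (1 + 2 * log x) / x) (Ici √(exp 1)) := by
  intro M hM v _ hMv
  have hM0 : 0 < M := (sqrt_pos.2 (exp_pos 1)).trans_le hM
  have hlogM : 1 / 2 ≤ log M := by
    have := log_le_log (sqrt_pos.2 (exp_pos 1)) hM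
    rwa [log_sqrt (exp_pos 1).le, log_exp] at this
  have hratio : M * log (v / M) ≤ v - M := by
    have := log_le_sub_one_of_pos (div_pos (hM0.trans_le hMv) hM0)
    rwa [← mul_le_mul_iff_of_pos_left hM0, mul_sub, mul_div_cancel₀ _ hM0.ne', mul_one] at this
  rw [log_div (hM0.trans_le hMv).ne' hM0.ne'] at hratio
  show (1 + 2 * log v) / v ≤ (1 + 2 * log M) / M
  rw [div_le_div_iff₀ (hM0.trans_le hMv) hM0]
  nlinarith [mul_nonneg (sub_nonneg.2 hMv) (by linarith : 0 ≤ 2 * log M - 1)]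

theorem q_rpow_sub_two_mul_le (q M v : ℝ) (hq : 2 ≤ q)
    (hM : Real.sqrt (Real.exp 1) ≤ M) (hv : M ≤ v) :
    q * v ^ (q - 1) - 2 * v ≤ ((1 + 2 * Real.log M) / M) * (q - 2) * v ^ q := by
  have hv0 : 0 < v := (sqrt_pos.2 (exp_pos 1)).trans_le (hM.trans hv)
  calc q * v ^ (q - 1) - 2 * v ≤ (1 + 2 * log v) * (q - 2) * v ^ (q - 1) :=
        mul_rpow_sub_one_sub_two_mul_le hv0
    _ = (1 + 2 * log v) / v * (q - 2) * v ^ q := by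
        rw [rpow_sub_one hv0.ne']
        ring
    _ ≤ (1 + 2 * log M) / M * (q - 2) * v ^ q := by
        have := one_add_two_mul_log_div_antitoneOn hM (hM.trans hv) hv
        gcongr
end

section
/- For all real q ≥ 2 and all real v with v ≥ M̄ ≥ √e, one has (1/2)·q·(q-1)·v^(q-2) - 1 ≤ (((1+q)/2 + ln M̄)/M̄²)·(q-2)·v^q. -/
set_option maxHeartbeats 1000000

open Real

lemma key_scalar (q M v : ℝ) (hq : 2 ≤ q) (hM : 1 ≤ M) (hv : M ≤ v) :
    (1/2)*q*(q-1) ≤ (q-2)*(((1+q)/2 + Real.log M)/M^2) * v^2 + v ^ (2-q) := by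
  have hM0 : (0:ℝ) < M := by linarith
  have hv1 : (1:ℝ) ≤ v := le_trans hM hv
  have hv0 : (0:ℝ) < v := by linarith
  set t : ℝ := v / M with ht_def
  have ht : 1 ≤ t := (one_le_div hM0).mpr hv
  have ht0 : 0 < t := by linarith
  have htv : t ≤ v := by
    rw [ht_def, div_le_iff₀ hM0]; nlinarith
  have h1 : 1 - M ^ (2-q) ≤ (q-2) * Real.log M := by
    have h := Real.add_one_le_exp (-((q-2)*Real.log M))
    rw [Real.rpow_def_of_pos hM0, show Real.log M * (2-q) = -((q-2)*Real.log M) by ring]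
    linarith
  have hMt : M = v / t := by rw [ht_def]; field_simp
  have htne : t ^ (2-q) ≠ 0 := by positivity
  have h2 : M ^ (2-q) * t^2 = v ^ (2-q) * t ^ q := by
    have e1 : M ^ (2-q) = v ^ (2-q) / t ^ (2-q) := by
      rw [hMt, Real.div_rpow hv0.le ht0.le]
    have e2 : t ^ (2:ℕ) = t ^ (2-q) * t ^ q := by
      rw [← Real.rpow_add ht0, ← Real.rpow_natCast t 2]; norm_num
    rw [e1, e2]; field_simp
  have h3 : (1:ℝ) ≤ t ^ q := by
    calc (1:ℝ) = t ^ (0:ℝ) := (Real.rpow_zero t).symm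
    _ ≤ t ^ q := Real.rpow_le_rpow_of_exponent_le ht (by linarith)
  have h4 : v ^ (2-q) ≤ t ^ (2-q) :=
    Real.rpow_le_rpow_of_nonpos ht0 htv (by linarith)
  have h7 : t ^ (2-q) * t ^ q = t^2 := by
    rw [← Real.rpow_add ht0, ← Real.rpow_natCast t 2]; norm_num
  have h5 : 1 - t ^ (2-q) ≤ (q-2) * Real.log t := by
    have h := Real.add_one_le_exp (-((q-2)*Real.log t))
    rw [Real.rpow_def_of_pos ht0, show Real.log t * (2-q) = -((q-2)*Real.log t) by ring]
    linarith
  have h6 : Real.log t ≤ t - 1 := Real.log_le_sub_one_of_pos ht0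
  have hv2 : v^2 = t^2 * M^2 := by rw [ht_def]; field_simp
  have hgoal_eq : (q-2)*(((1+q)/2 + Real.log M)/M^2) * v^2
      = (q-2)*((1+q)/2 + Real.log M) * t^2 := by
    rw [hv2]; field_simp
  rw [hgoal_eq]
  have step1 : (1 - M ^ (2-q)) * t^2 ≤ ((q-2) * Real.log M) * t^2 :=
    mul_le_mul_of_nonneg_right h1 (by positivity)
  have step2 : v ^ (2-q) * (t ^ q - 1) ≤ t ^ (2-q) * (t ^ q - 1) :=
    mul_le_mul_of_nonneg_right h4 (by linarith)
  have step3 : (q-2) * (t-1) ≤ (q-2) * (1+q)/2 * (t^2 - 1) := by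
    have hq2 : (0:ℝ) ≤ q - 2 := by linarith
    have htt : (0:ℝ) ≤ t^2 - t := by nlinarith
    have h21 : (0:ℝ) ≤ t^2 - 1 := by nlinarith
    nlinarith [mul_nonneg hq2 htt, mul_nonneg (mul_nonneg hq2 h21) (by linarith : (0:ℝ) ≤ q - 1)]
  nlinarith [h2, h7, h5, h6, step1, step2, step3]




theorem half_q_qsub_one_rpow_le (q M v : ℝ) (hq : 2 ≤ q)
    (hM : Real.sqrt (Real.exp 1) ≤ M) (hv : M ≤ v) :
    (1 / 2) * q * (q - 1) * v ^ (q - 2) - 1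
      ≤ (((1 + q) / 2 + Real.log M) / M ^ 2) * (q - 2) * v ^ q := by
  have hM1 : (1:ℝ) ≤ M := by
    refine le_trans ?_ hM
    have h := Real.sqrt_le_sqrt (show (1:ℝ) ≤ Real.exp 1 by nlinarith [Real.add_one_le_exp (1:ℝ)])
    simpa using h
  have hv0 : (0:ℝ) < v := by linarith
  have key := key_scalar q M v hq hM1 hv
  have hA : (0:ℝ) < v ^ (q-2) := Real.rpow_pos_of_pos hv0 _
  have h8 : v ^ (2-q) * v ^ (q-2) = 1 := by
    rw [← Real.rpow_add hv0]; norm_num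
  have h9 : v ^ (2:ℕ) * v ^ (q-2) = v ^ q := by
    rw [← Real.rpow_natCast v 2, ← Real.rpow_add hv0]; norm_num
  have hmul := mul_le_mul_of_nonneg_right key hA.le
  have hmul' : (1/2)*q*(q-1)*v^(q-2)
      ≤ (q-2)*(((1+q)/2 + Real.log M)/M^2)*v^q + 1 := by
    calc (1/2)*q*(q-1)*v^(q-2)
        ≤ ((q-2)*(((1+q)/2 + Real.log M)/M^2) * v^2 + v ^ (2-q)) * v^(q-2) := hmul
      _ = (q-2)*(((1+q)/2 + Real.log M)/M^2)*(v^(2:ℕ) * v^(q-2))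
            + v ^ (2-q) * v^(q-2) := by ring
      _ = (q-2)*(((1+q)/2 + Real.log M)/M^2)*v^q + 1 := by rw [h8, h9]
  linarith [hmul']
end

section
/- Let (X,μ) be a measure space, 3 ≤ q ≤ 4, and let u, r ∈ L^q(X,μ) with u ≥ 0, u + r ≥ 0, and ∫ u^(q-1)·r dμ = 0. Then ‖u+r‖_q² ≤ ‖u‖_q² + ‖u‖_q^(2-q)·( (q-1)·∫ u^(q-2)·r² dμ + (1/3)·(q-1)·(q-2)·∫ u^(q-3)·r³ dμ + (2/q)·∫ |r|^q dμ ). -/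
/-! For `a ≥ 0`, `a + b ≥ 0` and `3 ≤ q ≤ 4`, the pointwise bound
`(a + b) ^ q ≤ ∑ k ≤ 3, (q choose k) a ^ (q - k) b ^ k + |b| ^ q`
follows from subadditivity of `t ↦ t ^ (q - 3)` by integrating three times in the increment.
Integrated over `X`, its first-order term vanishes by the orthogonality of `r` to
`u ^ (q - 1)`, so `‖u + r‖_q ^ q ≤ ‖u‖_q ^ q + (q / 2) E` with `E` the bracket on the
right-hand side. Concavity of `Y ↦ Y ^ (2 / q)`, through its tangent line at
`Y = ‖u‖_q ^ q`, turns this into the bound on the squared norms. -/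

open MeasureTheory Set Finset

theorem Ring.succ_nsmul_choose_succ {R : Type*} [NonAssocRing R] [Pow R ℕ] [NatPowAssoc R]
    [BinomialRing R] (r : R) (k : ℕ) :
    (k + 1) • Ring.choose r (k + 1) = r * Ring.choose (r - 1) k := by
  simpa [Ring.choose_one_right] using Ring.choose_smul_choose r (Nat.le_add_left 1 k)

theorem Real.choose_two (r : ℝ) : Ring.choose r 2 = r * (r - 1) / 2 := by
  have h := Ring.succ_nsmul_choose_succ r 1
  rw [Ring.choose_one_right, nsmul_eq_mul] at h
  norm_num at h
  linarith

theorem Real.choose_three (r : ℝ) : Ring.choose r 3 = r * (r - 1) * (r - 2) / 6 := by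
  have h := Ring.succ_nsmul_choose_succ r 2
  rw [Real.choose_two, nsmul_eq_mul] at h
  norm_num at h
  linarith

-- The Taylor polynomial of `x ↦ x ^ p` at `a` with `n` terms (degrees `< n`), evaluated at `b`.
noncomputable def rpowTaylor (p a : ℝ) (n : ℕ) (b : ℝ) : ℝ :=
  ∑ k ∈ range n, Ring.choose p k * a ^ (p - k) * b ^ k

theorem rpowTaylor_one (p a b : ℝ) : rpowTaylor p a 1 b = a ^ p := by
  simp [rpowTaylor]

theorem rpowTaylor_succ_zero (p a : ℝ) (n : ℕ) : rpowTaylor p a (n + 1) 0 = a ^ p := by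
  simp [rpowTaylor, Finset.sum_range_succ']

theorem hasDerivAt_rpowTaylor (p a : ℝ) (n : ℕ) (b : ℝ) :
    HasDerivAt (rpowTaylor p a (n + 1)) (p * rpowTaylor (p - 1) a n b) b := by
  have hterm (k : ℕ) : HasDerivAt (fun b => Ring.choose p k * a ^ (p - k) * b ^ k)
      (Ring.choose p k * a ^ (p - k) * (k * b ^ (k - 1))) b :=
    (hasDerivAt_pow k b).const_mul _
  refine (HasDerivAt.fun_sum (u := range (n + 1)) fun k _ => hterm k).congr_deriv ?_
  rw [sum_range_succ', rpowTaylor, mul_sum]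
  simp only [CharP.cast_eq_zero, zero_mul, mul_zero, add_zero]
  refine sum_congr rfl fun k _ => ?_
  have hc := Ring.succ_nsmul_choose_succ p k
  rw [nsmul_eq_mul, Nat.cast_succ] at hc
  rw [show p - ((k + 1 : ℕ) : ℝ) = p - 1 - k by push_cast; ring, Nat.add_sub_cancel]
  push_cast
  linear_combination (a ^ (p - 1 - k) * b ^ k) * hc

-- `ε = -1` is the expansion of `(a - s) ^ p`, whose remainder alternates in sign with `m`;
-- carrying the sign `ε ^ (m + 1)` lets one induction on `m` treat both directions.
theorem mul_rpow_add_mul_sub_rpowTaylor_le {ε : ℝ} (hε : ε = 1 ∨ ε = -1) (m : ℕ)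
    {p a s : ℝ} (hmp : m ≤ p) (hpm : p ≤ m + 1) (ha : 0 ≤ a) (hs : 0 ≤ s)
    (has : 0 ≤ a + ε * s) :
    ε ^ (m + 1) * ((a + ε * s) ^ p - rpowTaylor p a (m + 1) (ε * s)) ≤ s ^ p := by
  induction m generalizing p s with
  | zero =>
    have hp0 : 0 ≤ p := by simpa using hmp
    have hp1 : p ≤ 1 := by simpa using hpm
    rw [rpowTaylor_one, zero_add, pow_one]
    rcases hε with rfl | rfl
    · rw [one_mul, one_mul]
      linarith [Real.rpow_add_le_add_rpow ha hs hp0 hp1]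
    · simp only [neg_one_mul, ← sub_eq_add_neg] at has ⊢
      have := Real.rpow_add_le_add_rpow has hs hp0 hp1
      rw [sub_add_cancel] at this
      linarith
  | succ m ih =>
    have hp1 : 1 ≤ p := by push_cast at hmp; linarith
    have hε2 : ε ^ 2 = 1 := by rcases hε with rfl | rfl <;> norm_num
    have hφ (t : ℝ) : HasDerivAt (fun t => ε ^ (m + 2) * ((a + ε * t) ^ p
        - rpowTaylor p a (m + 2) (ε * t)))
        (p * (ε ^ (m + 1) * ((a + ε * t) ^ (p - 1)
          - rpowTaylor (p - 1) a (m + 1) (ε * t)))) t := by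
      have hlin : HasDerivAt (fun t => a + ε * t) ε t := by
        simpa using ((hasDerivAt_id t).const_mul ε).const_add a
      have hmul : HasDerivAt (fun t => ε * t) ε t := by
        simpa using (hasDerivAt_id t).const_mul ε
      have := (((Real.hasDerivAt_rpow_const (Or.inr hp1)).comp t hlin).sub
        ((hasDerivAt_rpowTaylor p a (m + 1) (ε * t)).comp t hmul)).const_mul (ε ^ (m + 2))
      refine this.congr_deriv ?_
      linear_combination (p * ε ^ (m + 1) * ((a + ε * t) ^ (p - 1)
        - rpowTaylor (p - 1) a (m + 1) (ε * t))) * hε2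
    have hB (t : ℝ) : HasDerivAt (fun t => t ^ p) (p * t ^ (p - 1)) t :=
      Real.hasDerivAt_rpow_const (Or.inr hp1)
    have key := image_le_of_deriv_right_le_deriv_boundary
      (fun t _ => (hφ t).continuousAt.continuousWithinAt)
      (fun t _ => (hφ t).hasDerivWithinAt) (a := 0) (b := s) ?_
      (fun t _ => (hB t).continuousAt.continuousWithinAt)
      (fun t _ => (hB t).hasDerivWithinAt) ?_ (right_mem_Icc.2 hs)
    · simpa using key
    · simp [rpowTaylor_succ_zero, Real.zero_rpow (by linarith : p ≠ 0)]
    · intro t ht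
      have hat : 0 ≤ a + ε * t := by
        rcases hε with rfl | rfl <;> nlinarith [ht.1, ht.2]
      gcongr
      exact ih (by push_cast at hmp ⊢; linarith) (by push_cast at hpm ⊢; linarith) ht.1 hat

theorem rpow_add_le_rpowTaylor_add_abs_rpow {m : ℕ} (hm : Odd m) {p a b : ℝ} (hmp : m ≤ p)
    (hpm : p ≤ m + 1) (ha : 0 ≤ a) (hab : 0 ≤ a + b) :
    (a + b) ^ p ≤ rpowTaylor p a (m + 1) b + |b| ^ p := by
  rcases le_or_gt 0 b with hb | hb
  · have h := mul_rpow_add_mul_sub_rpowTaylor_le (Or.inl rfl) m hmp hpm ha hb (by simpa using hab)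
    simp only [one_pow, one_mul] at h
    rw [abs_of_nonneg hb]
    linarith
  · have h := mul_rpow_add_mul_sub_rpowTaylor_le (Or.inr rfl) m hmp hpm ha (neg_nonneg.2 hb.le)
      (by simpa using hab)
    simp only [hm.add_one.neg_one_pow, one_mul, neg_one_mul, neg_neg] at h
    rw [abs_of_neg hb]
    linarith

theorem rpow_mul_rpow_le_rpow_add_rpow {x y e f : ℝ} (hx : 0 ≤ x) (hy : 0 ≤ y) (he : 0 ≤ e)
    (hf : 0 ≤ f) : x ^ e * y ^ f ≤ x ^ (e + f) + y ^ (e + f) := by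
  have hM : x ^ e * y ^ f ≤ max x y ^ (e + f) := by
    rw [Real.rpow_add_of_nonneg (hx.trans (le_max_left x y)) he hf]
    gcongr
    exacts [le_max_left x y, le_max_right x y]
  rcases max_choice x y with h | h <;> rw [h] at hM
  · linarith [Real.rpow_nonneg hy (e + f)]
  · linarith [Real.rpow_nonneg hx (e + f)]

section Lp

variable {X : Type*} [MeasurableSpace X] {μ : Measure X} {p : ℝ}

theorem MeasureTheory.MemLp.integrable_norm_rpow_ofReal {f : X → ℝ}
    (hf : MemLp f (ENNReal.ofReal p) μ) (hp : 0 < p) : Integrable (fun x => ‖f x‖ ^ p) μ := by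
  simpa [ENNReal.toReal_ofReal hp.le] using
    hf.integrable_norm_rpow (by simpa using hp) ENNReal.ofReal_ne_top

theorem MeasureTheory.MemLp.toReal_eLpNorm_rpow {f : X → ℝ} (hf : MemLp f (ENNReal.ofReal p) μ)
    (hp : 0 < p) : (eLpNorm f (ENNReal.ofReal p) μ).toReal ^ p = ∫ x, ‖f x‖ ^ p ∂μ := by
  rw [hf.eLpNorm_eq_integral_rpow_norm (by simpa using hp) ENNReal.ofReal_ne_top,
    ENNReal.toReal_ofReal hp.le, ENNReal.toReal_ofReal (by positivity),
    Real.rpow_inv_rpow (by positivity) hp.ne']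

theorem integrable_rpow_sub_mul_pow {u r : X → ℝ} (hu : MemLp u (ENNReal.ofReal p) μ)
    (hr : MemLp r (ENNReal.ofReal p) μ) (hu0 : ∀ x, 0 ≤ u x) (hp : 0 < p) {k : ℕ}
    (hk : k ≤ p) : Integrable (fun x => u x ^ (p - k) * r x ^ k) μ := by
  refine Integrable.mono' ((hu.integrable_norm_rpow_ofReal hp).add
    (hr.integrable_norm_rpow_ofReal hp)) ?_ (Filter.Eventually.of_forall fun x => ?_)
  · exact ((Real.continuous_rpow_const (by linarith)).comp_aestronglyMeasurable
      hu.aestronglyMeasurable).mul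
      ((continuous_pow k).comp_aestronglyMeasurable hr.aestronglyMeasurable)
  · have h := rpow_mul_rpow_le_rpow_add_rpow (hu0 x) (abs_nonneg (r x)) (sub_nonneg.2 hk)
      (Nat.cast_nonneg k)
    rw [sub_add_cancel, Real.rpow_natCast] at h
    simpa [abs_mul, abs_of_nonneg (hu0 x), abs_of_nonneg (Real.rpow_nonneg (hu0 x) _)] using h

theorem integral_rpow_add_le {m : ℕ} (hm : Odd m) (hmp : m ≤ p) (hpm : p ≤ m + 1)
    {u r : X → ℝ} (hu : MemLp u (ENNReal.ofReal p) μ) (hr : MemLp r (ENNReal.ofReal p) μ)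
    (hu0 : ∀ x, 0 ≤ u x) (hur : ∀ x, 0 ≤ u x + r x) :
    ∫ x, (u x + r x) ^ p ∂μ ≤
      ∑ k ∈ range (m + 1), Ring.choose p k * ∫ x, u x ^ (p - k) * r x ^ k ∂μ
        + ∫ x, |r x| ^ p ∂μ := by
  have hp : 0 < p := lt_of_lt_of_le (by exact_mod_cast hm.pos) hmp
  have hterm (k : ℕ) (hk : k ∈ range (m + 1)) :
      Integrable (fun x => Ring.choose p k * u x ^ (p - k) * r x ^ k) μ := by
    have hkp : (k : ℝ) ≤ p :=
      le_trans (by exact_mod_cast Nat.lt_succ_iff.1 (mem_range.1 hk)) hmp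
    simpa only [mul_assoc] using
      (integrable_rpow_sub_mul_pow hu hr hu0 hp hkp).const_mul (Ring.choose p k)
  have hv : Integrable (fun x => (u x + r x) ^ p) μ := by
    simpa [fun x => abs_of_nonneg (hur x)] using (hu.add hr).integrable_norm_rpow_ofReal hp
  have hrp : Integrable (fun x => |r x| ^ p) μ := hr.integrable_norm_rpow_ofReal hp
  calc ∫ x, (u x + r x) ^ p ∂μ
      ≤ ∫ x, (rpowTaylor p (u x) (m + 1) (r x) + |r x| ^ p) ∂μ :=
        integral_mono hv ((integrable_finsetSum _ hterm).add hrp) fun x =>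
          rpow_add_le_rpowTaylor_add_abs_rpow hm hmp hpm (hu0 x) (hur x)
    _ = _ := by
        simp only [rpowTaylor]
        rw [integral_add (integrable_finsetSum _ hterm) hrp, integral_finsetSum _ hterm]
        simp only [mul_assoc, integral_const_mul]

end Lp

theorem sq_le_sq_add_rpow_mul_of_rpow_le {q M N E : ℝ} (hq : 2 ≤ q) (hM : 0 ≤ M) (hN : 0 < N)
    (h : M ^ q ≤ N ^ q + q / 2 * E) : M ^ 2 ≤ N ^ 2 + N ^ (2 - q) * E := by
  have hq0 : 0 < q := by linarith
  have hNq : 0 < N ^ q := by positivity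
  have hs : -1 ≤ q / 2 * E / N ^ q := by
    rw [le_div_iff₀ hNq]; linarith [Real.rpow_nonneg hM q]
  -- Bernoulli's inequality for `2 / q ≤ 1`: the tangent line bounds a concave power.
  have hbern := rpow_one_add_le_one_add_mul_self hs (by positivity : 0 ≤ 2 / q)
    (by rw [div_le_one hq0]; exact hq)
  have hsq (Z : ℝ) (hZ : 0 ≤ Z) : (Z ^ q) ^ (2 / q) = Z ^ 2 := by
    rw [← Real.rpow_mul hZ, mul_div_cancel₀ _ hq0.ne', Real.rpow_two]
  calc M ^ 2 = (M ^ q) ^ (2 / q) := (hsq M hM).symm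
    _ ≤ (N ^ q * (1 + q / 2 * E / N ^ q)) ^ (2 / q) := by
        gcongr
        rw [mul_add, mul_div_cancel₀ _ hNq.ne']; linarith
    _ = N ^ 2 * (1 + q / 2 * E / N ^ q) ^ (2 / q) := by
        rw [Real.mul_rpow hNq.le (by linarith), hsq N hN.le]
    _ ≤ N ^ 2 * (1 + 2 / q * (q / 2 * E / N ^ q)) := by gcongr
    _ = N ^ 2 + N ^ (2 - q) * E := by
        rw [Real.rpow_sub hN, Real.rpow_two]
        field_simp

theorem lq_norm_sq_expansion_q_three_four {X : Type*} [MeasurableSpace X]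
    (μ : Measure X) (q : ℝ) (hq3 : 3 ≤ q) (hq4 : q ≤ 4)
    (u r : X → ℝ)
    (hu : MemLp u (ENNReal.ofReal q) μ) (hr : MemLp r (ENNReal.ofReal q) μ)
    (hu0 : ∀ x, 0 ≤ u x) (hur : ∀ x, 0 ≤ u x + r x)
    (hune : ¬ u =ᵐ[μ] 0)
    (horth : ∫ x, (u x) ^ (q - 1) * r x ∂μ = 0) :
    (eLpNorm (u + r) (ENNReal.ofReal q) μ).toReal ^ 2
      ≤ (eLpNorm u (ENNReal.ofReal q) μ).toReal ^ 2
        + (eLpNorm u (ENNReal.ofReal q) μ).toReal ^ (2 - q)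
          * ((q - 1) * ∫ x, (u x) ^ (q - 2) * (r x) ^ 2 ∂μ
             + (1 / 3) * (q - 1) * (q - 2) * ∫ x, (u x) ^ (q - 3) * (r x) ^ 3 ∂μ
             + (2 / q) * ∫ x, |r x| ^ q ∂μ) := by
  have hq0 : 0 < q := by linarith
  have hNu : 0 < (eLpNorm u (ENNReal.ofReal q) μ).toReal :=
    ENNReal.toReal_pos (fun h => hune ((eLpNorm_eq_zero_iff hu.aestronglyMeasurable
      (by simpa using hq0)).1 h)) hu.eLpNorm_ne_top
  refine sq_le_sq_add_rpow_mul_of_rpow_le (by linarith) ENNReal.toReal_nonneg hNu ?_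
  rw [(hu.add hr).toReal_eLpNorm_rpow hq0, hu.toReal_eLpNorm_rpow hq0]
  have hexp := integral_rpow_add_le (m := 3) (by decide) (by norm_num; linarith)
    (by norm_num; linarith) hu hr hu0 hur
  simp only [sum_range_succ, sum_range_zero, Nat.cast_ofNat, Nat.cast_one, Nat.cast_zero,
    Real.choose_two, Real.choose_three, Ring.choose_zero_right, Ring.choose_one_right, sub_zero,
    pow_zero, pow_one, mul_one, one_mul, zero_add, horth] at hexp
  simp only [Pi.add_apply, Real.norm_eq_abs, abs_of_nonneg (hu0 _), abs_of_nonneg (hur _)]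
  field_simp
  linarith
end

section
/- Let (X,μ) be a measure space and let u, r ∈ L⁶(X,μ) with u ≥ 0, u + r ≥ 0, and ∫ u⁵·r dμ = 0. Then ‖u+r‖₆² ≤ ‖u‖₆² + ‖u‖₆^(-4)·( 5·∫ u⁴·r² dμ + (20/3)·∫ u³·r³ dμ + 5·∫ u²·r⁴ dμ + 2·∫ u·r⁵ dμ + (1/3)·∫ r⁶ dμ ). -/
/-!
Write `a = ‖u‖₆` and `b = ‖u + r‖₆`. Expanding `∫ (u + r)⁶` binomially and using `∫ u⁵ r = 0`,
the bracket on the right equals `(b⁶ - a⁶) / 3`. The claim `b² ≤ a² + (b⁶ - a⁶) / (3 a⁴)` is then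
the tangent-line inequality for the convex map `t ↦ t³` at `t = a²`, i.e.
`(b² - a²)² (b² + 2 a²) ≥ 0`.
-/

open Finset

lemma abs_pow_mul_abs_pow_sub_le_pow_add_pow (x y : ℝ) {k n : ℕ} (hk : k ≤ n) :
    |x| ^ k * |y| ^ (n - k) ≤ |x| ^ n + |y| ^ n := by
  rcases le_total |x| |y| with h | h
  · calc |x| ^ k * |y| ^ (n - k) ≤ |y| ^ k * |y| ^ (n - k) := by gcongr
      _ = |y| ^ n := by rw [← pow_add, Nat.add_sub_cancel' hk]
      _ ≤ |x| ^ n + |y| ^ n := le_add_of_nonneg_left (by positivity)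
  · calc |x| ^ k * |y| ^ (n - k) ≤ |x| ^ k * |x| ^ (n - k) := by gcongr
      _ = |x| ^ n := by rw [← pow_add, Nat.add_sub_cancel' hk]
      _ ≤ |x| ^ n + |y| ^ n := le_add_of_nonneg_right (by positivity)

lemma sq_le_sq_add_inv_mul_pow_six_sub (b : ℝ) {a : ℝ} (ha : 0 < a) :
    b ^ 2 ≤ a ^ 2 + (a ^ 4)⁻¹ * ((b ^ 6 - a ^ 6) / 3) := by
  rw [← sub_nonneg]
  have : a ^ 2 + (a ^ 4)⁻¹ * ((b ^ 6 - a ^ 6) / 3) - b ^ 2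
      = (b ^ 2 - a ^ 2) ^ 2 * (b ^ 2 + 2 * a ^ 2) / (3 * a ^ 4) := by
    field_simp
    ring
  rw [this]
  positivity

namespace MeasureTheory

variable {X : Type*} [MeasurableSpace X] {μ : Measure X}

lemma MemLp.eLpNorm_toReal_pow {E : Type*} [NormedAddCommGroup E] {f : X → E} {n : ℕ}
    (hf : MemLp f n μ) (hn : n ≠ 0) :
    (eLpNorm f n μ).toReal ^ n = ∫ x, ‖f x‖ ^ n ∂μ := by
  have hI : 0 ≤ ∫ x, ‖f x‖ ^ n ∂μ := integral_nonneg fun x => by positivity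
  rw [hf.eLpNorm_eq_integral_rpow_norm (by exact_mod_cast hn) (by simp)]
  simp only [ENNReal.toReal_natCast, Real.rpow_natCast]
  rw [ENNReal.toReal_ofReal (by positivity), Real.rpow_inv_natCast_pow hI hn]

lemma MemLp.integrable_pow_mul_pow {u r : X → ℝ} {n : ℕ} (hu : MemLp u n μ) (hr : MemLp r n μ)
    (hn : n ≠ 0) {k : ℕ} (hk : k ≤ n) :
    Integrable (fun x => u x ^ k * r x ^ (n - k)) μ := by
  refine ((hu.integrable_norm_pow hn).add (hr.integrable_norm_pow hn)).mono'
    ((hu.1.pow k).mul (hr.1.pow (n - k))) (ae_of_all _ fun x => ?_)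
  simpa [abs_mul, abs_pow] using abs_pow_mul_abs_pow_sub_le_pow_add_pow (u x) (r x) hk

lemma MemLp.integral_add_pow {u r : X → ℝ} {n : ℕ} (hu : MemLp u n μ) (hr : MemLp r n μ)
    (hn : n ≠ 0) :
    ∫ x, (u x + r x) ^ n ∂μ
      = ∑ k ∈ range (n + 1), n.choose k * ∫ x, u x ^ k * r x ^ (n - k) ∂μ := by
  simp_rw [add_pow]
  rw [integral_finsetSum _ fun k hk =>
    (hu.integrable_pow_mul_pow hr hn (Nat.lt_succ_iff.mp (mem_range.mp hk))).mul_const _]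
  simp_rw [integral_mul_const, mul_comm]

end MeasureTheory

open MeasureTheory

theorem l6_norm_sq_expansion_general {X : Type*} [MeasurableSpace X]
    (μ : Measure X) (u r : X → ℝ)
    (hu : MemLp u 6 μ) (hr : MemLp r 6 μ)
    (hune : ¬ u =ᵐ[μ] 0)
    (horth : ∫ x, (u x) ^ 5 * r x ∂μ = 0) :
    (eLpNorm (u + r) 6 μ).toReal ^ 2
      ≤ (eLpNorm u 6 μ).toReal ^ 2
        + (eLpNorm u 6 μ).toReal ^ (-4 : ℝ)
          * (5 * ∫ x, (u x) ^ 4 * (r x) ^ 2 ∂μ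
             + (20 / 3) * ∫ x, (u x) ^ 3 * (r x) ^ 3 ∂μ
             + 5 * ∫ x, (u x) ^ 2 * (r x) ^ 4 ∂μ
             + 2 * ∫ x, u x * (r x) ^ 5 ∂μ
             + (1 / 3) * ∫ x, (r x) ^ 6 ∂μ) := by
  have ha : 0 < (eLpNorm u 6 μ).toReal :=
    ENNReal.toReal_pos ((eLpNorm_eq_zero_iff hu.1 (by norm_num)).not.mpr hune) hu.2.ne
  have hu6 : MemLp u (6 : ℕ) μ := hu
  have hr6 : MemLp r (6 : ℕ) μ := hr
  have h6 : Even 6 := by decide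
  have ha6 : (eLpNorm u 6 μ).toReal ^ 6 = ∫ x, u x ^ 6 ∂μ := by
    simpa [h6.pow_abs] using hu6.eLpNorm_toReal_pow (by norm_num)
  have hb6 : (eLpNorm (u + r) 6 μ).toReal ^ 6 = ∫ x, (u x + r x) ^ 6 ∂μ := by
    simpa [h6.pow_abs] using (hu6.add hr6).eLpNorm_toReal_pow (by norm_num)
  have hcoeffs : 5 * ∫ x, (u x) ^ 4 * (r x) ^ 2 ∂μ
      + (20 / 3) * ∫ x, (u x) ^ 3 * (r x) ^ 3 ∂μ
      + 5 * ∫ x, (u x) ^ 2 * (r x) ^ 4 ∂μ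
      + 2 * ∫ x, u x * (r x) ^ 5 ∂μ
      + (1 / 3) * ∫ x, (r x) ^ 6 ∂μ
      = ((eLpNorm (u + r) 6 μ).toReal ^ 6 - (eLpNorm u 6 μ).toReal ^ 6) / 3 := by
    rw [hb6, ha6, hu6.integral_add_pow hr6 (by norm_num)]
    simp only [sum_range_succ, sum_range_zero]
    norm_num [Nat.choose, horth]
    ring
  rw [Real.rpow_neg ha.le, Real.rpow_ofNat, hcoeffs]
  exact sq_le_sq_add_inv_mul_pow_six_sub _ ha

theorem l6_norm_sq_expansion {X : Type*} [MeasurableSpace X]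
    (μ : Measure X) (u r : X → ℝ)
    (hu : MemLp u 6 μ) (hr : MemLp r 6 μ)
    (hu0 : ∀ x, 0 ≤ u x) (hur : ∀ x, 0 ≤ u x + r x)
    (hune : ¬ u =ᵐ[μ] 0)
    (horth : ∫ x, (u x) ^ 5 * r x ∂μ = 0) :
    (eLpNorm (u + r) 6 μ).toReal ^ 2
      ≤ (eLpNorm u 6 μ).toReal ^ 2
        + (eLpNorm u 6 μ).toReal ^ (-4 : ℝ)
          * (5 * ∫ x, (u x) ^ 4 * (r x) ^ 2 ∂μ
             + (20 / 3) * ∫ x, (u x) ^ 3 * (r x) ^ 3 ∂μ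
             + 5 * ∫ x, (u x) ^ 2 * (r x) ^ 4 ∂μ
             + 2 * ∫ x, u x * (r x) ^ 5 ∂μ
             + (1 / 3) * ∫ x, (r x) ^ 6 ∂μ) :=
  l6_norm_sq_expansion_general μ u r hu hr hune horth
end

section
/- Let α ∈ (0,1), h(p) = p^α + (1-p)^α - 1, h_d = 2^(1-α) - 1, and ξ = 2·(1 - 2^(-α)). Then for all p ∈ [0,1/2], (1 + ξ/(2·h_d))·h(p) ≥ p^α. -/
theorem h_mul_ge_p_rpow (α : ℝ) (hα0 : 0 < α) (hα1 : α < 1) (p : ℝ)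
    (hp0 : 0 ≤ p) (hp : p ≤ 1 / 2) :
    (1 + 2 * (1 - (2 : ℝ) ^ (-α)) / (2 * ((2 : ℝ) ^ (1 - α) - 1)))
        * (p ^ α + (1 - p) ^ α - 1) ≥ p ^ α := by
  have hcon : ConcaveOn ℝ (Set.Ici (0:ℝ)) (fun x : ℝ => x ^ α) :=
    (Real.strictConcaveOn_rpow hα0 hα1).concaveOn
  set T : ℝ := (2:ℝ) ^ (-α) with hT
  have hhalf : ((1:ℝ)/2) ^ α = T := by
    rw [hT, Real.rpow_neg (by norm_num : (0:ℝ) ≤ 2)]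
    rw [show (1:ℝ)/2 = (2:ℝ)⁻¹ by norm_num, Real.inv_rpow (by norm_num : (0:ℝ) ≤ 2)]
  have hTlt : T < 1 := by
    rw [hT]
    calc (2:ℝ) ^ (-α) < (2:ℝ) ^ (0:ℝ) :=
          Real.rpow_lt_rpow_left_iff (by norm_num) |>.2 (by linarith)
      _ = 1 := Real.rpow_zero 2
  have hTgt : (1:ℝ)/2 < T := by
    rw [hT]
    calc (1:ℝ)/2 = (2:ℝ) ^ (-1:ℝ) := by
          rw [Real.rpow_neg_one]; norm_num
      _ < (2:ℝ) ^ (-α) := Real.rpow_lt_rpow_left_iff (by norm_num) |>.2 (by linarith)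
  have h2T : (2:ℝ) ^ (1 - α) = 2 * T := by
    rw [hT, show (1:ℝ) - α = 1 + (-α) by ring, Real.rpow_add (by norm_num), Real.rpow_one]
  -- chord inequality for (1-p)^α
  have hB : (1 - p) ^ α ≥ 1 - 2 * (1 - T) * p := by
    have := hcon.2 (Set.mem_Ici.2 (by norm_num : (0:ℝ) ≤ 1))
      (Set.mem_Ici.2 (by norm_num : (0:ℝ) ≤ 1/2))
      (by linarith : (0:ℝ) ≤ 1 - 2*p) (by linarith : (0:ℝ) ≤ 2*p) (by ring)
    simp only [smul_eq_mul] at this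
    have harg : (1 - 2*p) * 1 + 2*p * (1/2) = 1 - p := by ring
    rw [harg, Real.one_rpow, hhalf] at this
    nlinarith [this]
  -- chord inequality for p^α
  have hA : p ^ α ≥ 2 * T * p := by
    have := hcon.2 (Set.mem_Ici.2 (le_refl (0:ℝ)))
      (Set.mem_Ici.2 (by norm_num : (0:ℝ) ≤ 1/2))
      (by linarith : (0:ℝ) ≤ 1 - 2*p) (by linarith : (0:ℝ) ≤ 2*p) (by ring)
    simp only [smul_eq_mul] at this
    have harg : (1 - 2*p) * 0 + 2*p * (1/2) = p := by ring
    rw [harg, hhalf, Real.zero_rpow (ne_of_gt hα0)] at this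
    nlinarith [this]
  rw [h2T]
  have hden : (0:ℝ) < 2 * (2 * T - 1) := by linarith
  have hc : 2 * (1 - T) / (2 * (2 * T - 1)) * (2 * (2 * T - 1)) = 2 * (1 - T) :=
    div_mul_cancel₀ _ (ne_of_gt hden)
  have hcpos : 0 ≤ 2 * (1 - T) / (2 * (2 * T - 1)) :=
    div_nonneg (by linarith) (le_of_lt hden)
  set c : ℝ := 2 * (1 - T) / (2 * (2 * T - 1))
  have hH : p ^ α + (1 - p) ^ α - 1 ≥ 2 * (2 * T - 1) * p := by nlinarith
  have hH2 : p ^ α + (1 - p) ^ α - 1 ≥ p ^ α - 2 * (1 - T) * p := by linarith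
  nlinarith [mul_le_mul_of_nonneg_left hH hcpos, hc]
end

section
/- Let d ≥ 3 be an integer, q = 2d/(d-2), θ = q - 2, and let M > 0, γ ∈ (0,M]. Define for r ≥ -1 the pieces r₁ = min(r,γ), r₂ = min(max(r-γ,0), M-γ), r₃ = max(r-M,0). If r ≤ γ then (1+r)^q - 1 - q·r ≤ (1/2)·q·(q-1)·r₁² + (3/2)·γ·θ·r₁², provided 2 ≤ q ≤ 3. -/
/-! The difference between `(1 + x) ^ q` and its cubic comparison polynomial is monotone on
either side of `0`, because its derivative is `q` times a Bernoulli gap for `(1 + x) ^ (q - 1)`.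
For `x ≤ 0` Bernoulli's inequality with exponent `q - 1 ≥ 1` gives the sign; for `x ≥ 0` one
writes `(1 + x) ^ (q - 1) = (1 + x) (1 + x) ^ (q - 2)`, uses the reverse Bernoulli inequality for
`q - 2 ∈ [0, 1]`, and the leftover `q (q - 2) x²` is absorbed by `3 (q - 2) x²` since `q ≤ 3`. -/

open Real Set

lemma hasDerivAt_one_add_rpow_sub_cubic {q : ℝ} (hq : 1 ≤ q) (c x : ℝ) :
    HasDerivAt (fun x ↦ (1 + x) ^ q - (1 + q * x + q * (q - 1) / 2 * x ^ 2 + c * x ^ 3))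
      (q * (1 + x) ^ (q - 1) - (q + q * (q - 1) * x + 3 * c * x ^ 2)) x := by
  have hpow : HasDerivAt (fun x ↦ (1 + x) ^ q) (q * (1 + x) ^ (q - 1)) x := by
    simpa using ((hasDerivAt_id x).const_add 1).rpow_const (p := q) (Or.inr hq)
  have hpoly := ((((hasDerivAt_id x).const_mul q).const_add 1).add
    ((hasDerivAt_pow 2 x).const_mul (q * (q - 1) / 2))).add ((hasDerivAt_pow 3 x).const_mul c)
  exact (hpow.sub hpoly).congr_deriv (by norm_num; ring)

lemma one_add_rpow_le_of_nonpos {q r : ℝ} (hq : 2 ≤ q) (hr : -1 ≤ r) (hr0 : r ≤ 0) :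
    (1 + r) ^ q ≤ 1 + q * r + q * (q - 1) / 2 * r ^ 2 := by
  have hderiv := hasDerivAt_one_add_rpow_sub_cubic (by linarith : 1 ≤ q) 0
  have hmono := monotoneOn_of_hasDerivWithinAt_nonneg (convex_Icc r 0)
    (fun x _ ↦ (hderiv x).continuousAt.continuousWithinAt) (fun x _ ↦ (hderiv x).hasDerivWithinAt)
    (by
      rw [interior_Icc]
      rintro x ⟨hrx, -⟩
      have hbern :=
        one_add_mul_self_le_rpow_one_add (by linarith : -1 ≤ x) (by linarith : 1 ≤ q - 1)
      have := mul_le_mul_of_nonneg_left hbern (by linarith : 0 ≤ q)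
      linarith)
  have := hmono (left_mem_Icc.2 hr0) (right_mem_Icc.2 hr0) hr0
  norm_num at this
  linarith

lemma one_add_rpow_le_of_nonneg {q r : ℝ} (hq2 : 2 ≤ q) (hq3 : q ≤ 3) (hr : 0 ≤ r) :
    (1 + r) ^ q ≤ 1 + q * r + q * (q - 1) / 2 * r ^ 2 + (q - 2) * r ^ 3 := by
  have hderiv := hasDerivAt_one_add_rpow_sub_cubic (by linarith : 1 ≤ q) (q - 2)
  have hanti := antitoneOn_of_hasDerivWithinAt_nonpos (convex_Icc 0 r)
    (fun x _ ↦ (hderiv x).continuousAt.continuousWithinAt) (fun x _ ↦ (hderiv x).hasDerivWithinAt)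
    (by
      rw [interior_Icc]
      rintro x ⟨hx, -⟩
      have hx1 : 0 < 1 + x := by linarith
      have hsplit : (1 + x) ^ (q - 1) = (1 + x) * (1 + x) ^ (q - 2) := by
        rw [show q - 1 = 1 + (q - 2) by ring, rpow_add hx1, rpow_one]
      have hbern : (1 + x) ^ (q - 2) ≤ 1 + (q - 2) * x :=
        rpow_one_add_le_one_add_mul_self (by linarith) (by linarith) (by linarith)
      have hle : (1 + x) ^ (q - 1) ≤ (1 + x) * (1 + (q - 2) * x) :=
        hsplit ▸ mul_le_mul_of_nonneg_left hbern hx1.le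
      have := mul_le_mul_of_nonneg_left hle (by linarith : 0 ≤ q)
      nlinarith [mul_nonneg (mul_nonneg (sub_nonneg.2 hq2) (sq_nonneg x)) (sub_nonneg.2 hq3)])
  have := hanti (left_mem_Icc.2 hr) (right_mem_Icc.2 hr) hr
  norm_num at this
  linarith

lemma one_add_rpow_le_add_max_zero_pow_three {q r : ℝ} (hq2 : 2 ≤ q) (hq3 : q ≤ 3) (hr : -1 ≤ r) :
    (1 + r) ^ q ≤ 1 + q * r + q * (q - 1) / 2 * r ^ 2 + (q - 2) * max r 0 ^ 3 := by
  rcases le_total r 0 with hr0 | hr0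
  · simpa [max_eq_right hr0] using one_add_rpow_le_of_nonpos hq2 hr hr0
  · simpa [max_eq_left hr0] using one_add_rpow_le_of_nonneg hq2 hq3 hr0

lemma max_zero_pow_three_le_mul_sq {r γ : ℝ} (hγ : 0 ≤ γ) (hrγ : r ≤ γ) :
    max r 0 ^ 3 ≤ γ * r ^ 2 := by
  rcases le_total r 0 with hr0 | hr0
  · simpa [max_eq_right hr0] using mul_nonneg hγ (sq_nonneg r)
  · rw [max_eq_left hr0, pow_succ']
    exact mul_le_mul_of_nonneg_right hrγ (sq_nonneg r)

theorem cutting_estimate_small_range_general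
    (q θ γ r : ℝ)
    (hθ : θ = q - 2)
    (hγ0 : 0 < γ)
    (hr : -1 ≤ r) (hrγ : r ≤ γ)
    (hq2 : 2 ≤ q) (hq3 : q ≤ 3) :
    (1 + r) ^ q - 1 - q * r
      ≤ (1 / 2) * q * (q - 1) * (min r γ) ^ 2
        + (3 / 2) * γ * θ * (min r γ) ^ 2 := by
  subst hθ
  rw [min_eq_left hrγ]
  have htaylor := one_add_rpow_le_add_max_zero_pow_three hq2 hq3 hr
  have hcube : (q - 2) * max r 0 ^ 3 ≤ (q - 2) * (γ * r ^ 2) :=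
    mul_le_mul_of_nonneg_left (max_zero_pow_three_le_mul_sq hγ0.le hrγ) (by linarith)
  have hslack : 0 ≤ γ * (q - 2) * r ^ 2 :=
    mul_nonneg (mul_nonneg hγ0.le (by linarith)) (sq_nonneg r)
  linarith

theorem cutting_estimate_small_range (d : ℕ) (hd : 3 ≤ d)
    (q θ M γ r : ℝ)
    (hq : q = 2 * d / (d - 2)) (hθ : θ = q - 2)
    (hM : 0 < M) (hγ0 : 0 < γ) (hγM : γ ≤ M)
    (hr : -1 ≤ r) (hrγ : r ≤ γ)
    (hq2 : 2 ≤ q) (hq3 : q ≤ 3) :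
    (1 + r) ^ q - 1 - q * r
      ≤ (1 / 2) * q * (q - 1) * (min r γ) ^ 2
        + (3 / 2) * γ * θ * (min r γ) ^ 2 :=
  cutting_estimate_small_range_general q θ γ r hθ hγ0 hr hrγ hq2 hq3
end
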